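/- arXiv:1110.4977 — 2 statements merged into one kernel-verified Lean document; each statement's English description precedes it below -/
import Mathlib

section
/- Let G be a simple graph with an alternating 4-cycle ⟨a,b:c,d⟩ and let H be the result of the 2-switch on ⟨a,b:c,d⟩. If H is not isomorphic to G, then there exist vertices u, v ∉ {a,b,c,d} (possibly u = v) such that u is adjacent to exactly one of a, c and v is adjacent to exactly one of b, d. -/
/-!
Relabelling `a ↔ c` turns the edges `ab`, `cd` of `G` into `cb`, `ad`, which is exactly the
2-switch; it fixes every other edge as soon as no vertex outside `{a, b, c, d}` tells `a` and `c`
apart. So if the 2-switch is not isomorphic to `G`, some outside vertex `u` sees exactly one of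
`a`, `c`, and the same argument for the alternating cycle `⟨b, a : d, c⟩`, which has the same
2-switch, produces `v`.
-/

open SimpleGraph

/-- An alternating 4-cycle ⟨a,b:c,d⟩: four distinct vertices with ab, cd edges
and bc, ad non-edges. -/
def A4 {V : Type*} (G : SimpleGraph V) (a b c d : V) : Prop :=
  a ≠ b ∧ a ≠ c ∧ a ≠ d ∧ b ≠ c ∧ b ≠ d ∧ c ≠ d ∧
  G.Adj a b ∧ G.Adj c d ∧ ¬ G.Adj b c ∧ ¬ G.Adj a d

/-- The 2-switch on ⟨a,b:c,d⟩: delete edges ab, cd and add edges bc, ad. -/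
def twoSwitch {V : Type*} (G : SimpleGraph V) (a b c d : V) : SimpleGraph V :=
  SimpleGraph.fromEdgeSet ((G.edgeSet \ {s(a,b), s(c,d)}) ∪ {s(b,c), s(a,d)})

section

variable {V : Type*} {G : SimpleGraph V} {a b c d : V}

theorem twoSwitch_adj {x y : V} :
    (twoSwitch G a b c d).Adj x y ↔ x ≠ y ∧
      (G.Adj x y ∧ s(x, y) ≠ s(a, b) ∧ s(x, y) ≠ s(c, d) ∨ s(x, y) = s(b, c) ∨ s(x, y) = s(a, d)) := by
  simp only [twoSwitch, fromEdgeSet_adj, Set.mem_union, Set.mem_sdiff, Set.mem_insert_iff,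
    Set.mem_singleton_iff, mem_edgeSet, not_or]
  tauto

theorem twoSwitch_comm : twoSwitch G b a d c = twoSwitch G a b c d := by
  rw [twoSwitch, twoSwitch, Sym2.eq_swap (a := b), Sym2.eq_swap (a := d), Set.pair_comm s(a, d)]

theorem A4.symm (h : A4 G a b c d) : A4 G b a d c := by
  obtain ⟨hab, hac, had, hbc, hbd, hcd, hGab, hGcd, hGbc, hGad⟩ := h
  exact ⟨hab.symm, hbd, hbc, had, hac, hcd.symm, hGab.symm, hGcd.symm, hGad, hGbc⟩

def A4.isoTwoSwitch [DecidableEq V] (h : A4 G a b c d)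
    (hac : ∀ u ∉ ({a, b, c, d} : Set V), G.Adj u a ↔ G.Adj u c) :
    twoSwitch G a b c d ≃g G where
  toEquiv := Equiv.swap a c
  map_rel_iff' {x y} := by
    obtain ⟨hab, hac', had, hbc, hbd, hcd, hGab, hGcd, hGbc, hGad⟩ := h
    simp only [Set.mem_insert_iff, Set.mem_singleton_iff, not_or] at hac
    simp only [twoSwitch_adj, Sym2.eq_iff, Equiv.swap_apply_def]
    grind [SimpleGraph.adj_comm, SimpleGraph.irrefl]

theorem A4.exists_xor_adj_of_not_nonempty_iso (h : A4 G a b c d)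
    (hiso : ¬ Nonempty (twoSwitch G a b c d ≃g G)) :
    ∃ u ∉ ({a, b, c, d} : Set V), Xor (G.Adj u a) (G.Adj u c) := by
  classical
  by_contra! hac
  exact hiso ⟨h.isoTwoSwitch fun u hu => by simpa [xor_iff_not_iff] using hac u hu⟩

end

theorem stmt_3 {V : Type*} (G : SimpleGraph V) (a b c d : V)
    (h : A4 G a b c d)
    (hiso : ¬ Nonempty (twoSwitch G a b c d ≃g G)) :
    ∃ u v : V, u ∉ ({a, b, c, d} : Set V) ∧ v ∉ ({a, b, c, d} : Set V) ∧
      Xor' (G.Adj u a) (G.Adj u c) ∧ Xor' (G.Adj v b) (G.Adj v d) := by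
  obtain ⟨u, hu, hua⟩ := h.exists_xor_adj_of_not_nonempty_iso hiso
  obtain ⟨v, hv, hvb⟩ := h.symm.exists_xor_adj_of_not_nonempty_iso (twoSwitch_comm (G := G) ▸ hiso)
  have hcycle : ({b, a, d, c} : Set V) = {a, b, c, d} := by
    rw [Set.insert_comm b a, Set.pair_comm d c]
  exact ⟨u, v, hu, hcycle ▸ hv, hua, hvb⟩
end

section
/- Let G be a finite simple graph with an alternating 4-cycle ⟨a,b:c,d⟩ and let H be the result of the 2-switch on ⟨a,b:c,d⟩. Let A be the set of vertices v ∉ {a,b,c,d} whose neighborhood intersects {a,b,c,d} in exactly {a,b} or exactly {c,d}, and let B be the set of vertices v ∉ {a,b,c,d} whose neighborhood intersects {a,b,c,d} in exactly {b,c} or exactly {a,d}. Then (number of triangles in G) − (number of triangles in H) = |A| − |B|. In particular, if H ≅ G then |A| = |B|. -/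
/-
A triangle of `G` contains at most one of the two deleted edges `ab`, `cd`, and the triangles
containing neither are exactly the triangles of `H` containing neither of the added edges `bc`,
`ad`. The triangles through an edge `xy` correspond to the common neighbours of `x` and `y`; for
the four edges involved these all lie outside `{a, b, c, d}`, where `G` and `H` agree. Hence the
difference of the triangle counts is a sum over the vertices `v` outside the 4-cycle of
`[v ~ a, b] + [v ~ c, d] - [v ~ b, c] - [v ~ d, a]`, and a check of the sixteen possible
neighbourhoods of `v` on the cycle shows that this is `1` on `A`, `-1` on `B` and `0` elsewhere.
-/

open SimpleGraph

open Finset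

namespace Finset
variable {α : Type*}

theorem card_eq_card_filter_add_card_filter_add_card_filter_not_and_not (s : Finset α)
    {p q : α → Prop} [DecidablePred p] [DecidablePred q] (h : ∀ x ∈ s, p x → ¬q x) :
    #s = #{x ∈ s | p x} + #{x ∈ s | q x} + #{x ∈ s | ¬p x ∧ ¬q x} := by
  classical
  rw [← card_union_of_disjoint (disjoint_filter.mpr h), ← filter_or,
    ← card_filter_add_card_filter_not fun x => p x ∨ q x]
  simp only [not_or]

theorem card_filter_sides_four_cycle (s : Finset α) (p₁ p₂ p₃ p₄ : α → Prop)
    [DecidablePred p₁] [DecidablePred p₂] [DecidablePred p₃] [DecidablePred p₄] :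
    (#{x ∈ s | p₁ x ∧ p₂ x} + #{x ∈ s | p₃ x ∧ p₄ x} - #{x ∈ s | p₂ x ∧ p₃ x} -
        #{x ∈ s | p₁ x ∧ p₄ x} : ℤ) =
      #{x ∈ s | p₁ x ∧ p₂ x ∧ ¬p₃ x ∧ ¬p₄ x ∨ p₃ x ∧ p₄ x ∧ ¬p₁ x ∧ ¬p₂ x} -
      #{x ∈ s | p₂ x ∧ p₃ x ∧ ¬p₁ x ∧ ¬p₄ x ∨ p₁ x ∧ p₄ x ∧ ¬p₂ x ∧ ¬p₃ x} := by
  simp only [natCast_card_filter, ← sum_add_distrib, ← sum_sub_distrib]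
  refine sum_congr rfl fun x _ => ?_
  by_cases h₁ : p₁ x <;> by_cases h₂ : p₂ x <;> by_cases h₃ : p₃ x <;> by_cases h₄ : p₄ x <;>
    simp [h₁, h₂, h₃, h₄]

theorem inter_eq_pair_iff [DecidableEq α] {s u : Finset α} {p q : α} (hp : p ∈ u) (hq : q ∈ u) :
    s ∩ u = {p, q} ↔ p ∈ s ∧ q ∈ s ∧ ∀ x ∈ u, x ∈ s → x = p ∨ x = q := by
  simp only [Finset.ext_iff, mem_inter, mem_insert, mem_singleton]
  grind

end Finset

namespace SimpleGraph
variable {V W : Type*}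

theorem Embedding.card_cliqueFinset_le [Fintype V] [Fintype W] [DecidableEq V] [DecidableEq W]
    {G : SimpleGraph V} {H : SimpleGraph W} [DecidableRel G.Adj] [DecidableRel H.Adj]
    (f : G ↪g H) (n : ℕ) :
    #(G.cliqueFinset n) ≤ #(H.cliqueFinset n) := by
  have hle : G.map f.toEmbedding ≤ H := (map_le_iff_le_comap _ _ _).mpr f.toHom.le_comap
  refine card_le_card_of_injOn (·.map f.toEmbedding) (fun s hs => ?_)
    (Finset.map_injective _).injOn
  simp only [coe_cliqueFinset, mem_cliqueSet_iff] at hs ⊢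
  exact hs.map.mono hle

theorem Iso.card_cliqueFinset_eq [Fintype V] [Fintype W] [DecidableEq V] [DecidableEq W]
    {G : SimpleGraph V} {H : SimpleGraph W} [DecidableRel G.Adj] [DecidableRel H.Adj]
    (e : G ≃g H) (n : ℕ) :
    #(G.cliqueFinset n) = #(H.cliqueFinset n) :=
  (e.toEmbedding.card_cliqueFinset_le n).antisymm (e.symm.toEmbedding.card_cliqueFinset_le n)

theorem card_filter_mem_cliqueFinset_three_of_adj [Fintype V] [DecidableEq V]
    {G : SimpleGraph V} [DecidableRel G.Adj] {x y : V} (hxy : G.Adj x y) :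
    #{T ∈ G.cliqueFinset 3 | x ∈ T ∧ y ∈ T} = #{v | G.Adj x v ∧ G.Adj y v} := by
  symm
  refine card_bij (fun v _ => {x, y, v}) ?_ ?_ ?_
  · intro v hv
    simp only [mem_filter, mem_univ, true_and] at hv
    simp [is3Clique_triple_iff, hxy, hv.1, hv.2]
  · intro v hv w hw hvw
    simp only [mem_filter, mem_univ, true_and] at hv hw
    have : v ∈ ({x, y, w} : Finset V) := hvw ▸ by simp
    simp only [mem_insert, mem_singleton] at this
    grind [Adj.ne]
  · intro T hT
    simp only [mem_filter, mem_cliqueFinset_iff] at hT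
    obtain ⟨hT, hx, hy⟩ := hT
    have hsub : {x, y} ⊆ T := by grind [insert_subset_iff]
    obtain ⟨v, hv⟩ : ∃ v, T \ {x, y} = {v} :=
      card_eq_one.mp (by rw [card_sdiff_of_subset hsub, hT.card_eq, card_pair hxy.ne])
    have hvT : v ∈ T \ {x, y} := hv ▸ mem_singleton_self v
    simp only [mem_sdiff, mem_insert, mem_singleton, not_or] at hvT
    refine ⟨v, ?_, ?_⟩
    · simpa using ⟨hT.1 hx hvT.1 (Ne.symm hvT.2.1), hT.1 hy hvT.1 (Ne.symm hvT.2.2)⟩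
    · rw [← union_sdiff_of_subset hsub, hv, insert_union, singleton_union]

theorem card_cliqueFinset_three_eq_of_adj_of_adj [Fintype V] [DecidableEq V]
    {G : SimpleGraph V} [DecidableRel G.Adj] {p q r s : V} (hpq : G.Adj p q) (hrs : G.Adj r s)
    (hpr : p ≠ r) (hps : p ≠ s) (hqr : q ≠ r) (hqs : q ≠ s) :
    #(G.cliqueFinset 3) = #{v | G.Adj p v ∧ G.Adj q v} + #{v | G.Adj r v ∧ G.Adj s v} +
      #{T ∈ G.cliqueFinset 3 | ¬(p ∈ T ∧ q ∈ T) ∧ ¬(r ∈ T ∧ s ∈ T)} := by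
  rw [← card_filter_mem_cliqueFinset_three_of_adj hpq,
    ← card_filter_mem_cliqueFinset_three_of_adj hrs]
  refine card_eq_card_filter_add_card_filter_add_card_filter_not_and_not _ ?_
  rintro T hT ⟨hp, hq⟩ ⟨hr, hs⟩
  have h4 : #{p, q, r, s} = 4 :=
    card_eq_four.mpr ⟨p, q, r, s, hpq.ne, hpr, hps, hqr, hqs, hrs.ne, rfl⟩
  have := card_le_card (show {p, q, r, s} ⊆ T by grind [insert_subset_iff])
  rw [h4, (mem_cliqueFinset_iff.mp hT).card_eq] at this
  omega

theorem filter_adj_and_adj_eq_filter_compl [Fintype V] [DecidableEq V] {G : SimpleGraph V}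
    [DecidableRel G.Adj] {x y : V} {u : Finset V} (hu : ∀ w ∈ u, ¬(G.Adj x w ∧ G.Adj y w)) :
    ({v | G.Adj x v ∧ G.Adj y v} : Finset V) = {v ∈ uᶜ | G.Adj v x ∧ G.Adj v y} := by
  ext v
  simp only [mem_filter, mem_univ, true_and, mem_compl, G.adj_comm v]
  exact ⟨fun hv => ⟨fun hvu => hu v hvu hv, hv⟩, And.right⟩

end SimpleGraph

section TwoSwitch
variable {V : Type*} {G : SimpleGraph V} {a b c d x y : V}

theorem twoSwitch_adj_iff_of_ne (hab : s(x, y) ≠ s(a, b)) (hcd : s(x, y) ≠ s(c, d))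
    (hbc : s(x, y) ≠ s(b, c)) (had : s(x, y) ≠ s(a, d)) :
    (twoSwitch G a b c d).Adj x y ↔ G.Adj x y := by
  simp only [twoSwitch, fromEdgeSet_adj, Set.mem_union, Set.mem_sdiff, mem_edgeSet,
    Set.mem_insert_iff, Set.mem_singleton_iff, hab, hcd, hbc, had, or_self, or_false,
    not_false_eq_true, and_true]
  exact and_iff_left_of_imp Adj.ne

theorem twoSwitch_adj_iff_of_notMem [DecidableEq V] (hx : x ∉ ({a, b, c, d} : Finset V)) :
    (twoSwitch G a b c d).Adj x y ↔ G.Adj x y := by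
  have avoid : ∀ {p q}, p ∈ ({a, b, c, d} : Finset V) → q ∈ ({a, b, c, d} : Finset V) →
      s(x, y) ≠ s(p, q) := by
    intro p q hp hq h
    rcases Sym2.eq_iff.mp h with ⟨rfl, -⟩ | ⟨rfl, -⟩ <;> contradiction
  exact twoSwitch_adj_iff_of_ne (avoid (by simp) (by simp)) (avoid (by simp) (by simp))
    (avoid (by simp) (by simp)) (avoid (by simp) (by simp))

theorem isNClique_twoSwitch_iff {n : ℕ} {T : Finset V} (hab : ¬(a ∈ T ∧ b ∈ T))
    (hcd : ¬(c ∈ T ∧ d ∈ T)) (hbc : ¬(b ∈ T ∧ c ∈ T)) (had : ¬(a ∈ T ∧ d ∈ T)) :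
    (twoSwitch G a b c d).IsNClique n T ↔ G.IsNClique n T := by
  have key : ∀ {x y}, x ∈ T → y ∈ T → ((twoSwitch G a b c d).Adj x y ↔ G.Adj x y) := by
    intro x y hx hy
    have avoid : ∀ {p q}, ¬(p ∈ T ∧ q ∈ T) → s(x, y) ≠ s(p, q) := by
      intro p q hpq h
      rcases Sym2.eq_iff.mp h with ⟨rfl, rfl⟩ | ⟨rfl, rfl⟩ <;> tauto
    exact twoSwitch_adj_iff_of_ne (avoid hab) (avoid hcd) (avoid hbc) (avoid had)
  simp only [isNClique_iff, isClique_iff, Set.Pairwise, mem_coe]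
  exact and_congr_left' ⟨fun hT x hx y hy hxy => (key hx hy).mp (hT hx hy hxy),
    fun hT x hx y hy hxy => (key hx hy).mpr (hT hx hy hxy)⟩

theorem A4.switched (h : A4 G a b c d) : A4 (twoSwitch G a b c d) b c d a := by
  obtain ⟨hab, hac, had, hbc, hbd, hcd, gab, gcd, gbc, gad⟩ := h
  refine ⟨hbc, hbd, hab.symm, hcd, hac.symm, had.symm, ?_, ?_, ?_, ?_⟩ <;>
    simp [twoSwitch, hab, hac, had, hbc, hbd, hcd, hab.symm, hac.symm, had.symm, hbc.symm,
      hbd.symm, hcd.symm]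

end TwoSwitch

namespace A4
variable {V : Type*} {G : SimpleGraph V} {a b c d : V}

theorem forall_mem_not_adj_and_adj [DecidableEq V] (h : A4 G a b c d) :
    ∀ w ∈ ({a, b, c, d} : Finset V), ¬(G.Adj a w ∧ G.Adj b w) ∧ ¬(G.Adj c w ∧ G.Adj d w) := by
  obtain ⟨-, -, -, -, -, -, -, -, gbc, gad⟩ := h
  simp only [mem_insert, mem_singleton]
  rintro w (rfl | rfl | rfl | rfl) <;> simp [gbc, gad, mt G.adj_symm gbc, mt G.adj_symm gad]

theorem filter_cliqueFinset_three_eq_twoSwitch [Fintype V] [DecidableEq V] [DecidableRel G.Adj]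
    [DecidableRel (twoSwitch G a b c d).Adj] (h : A4 G a b c d) :
    {T ∈ G.cliqueFinset 3 | ¬(a ∈ T ∧ b ∈ T) ∧ ¬(c ∈ T ∧ d ∈ T)} =
      {T ∈ (twoSwitch G a b c d).cliqueFinset 3 | ¬(b ∈ T ∧ c ∈ T) ∧ ¬(a ∈ T ∧ d ∈ T)} := by
  obtain ⟨-, -, hne_ba, hne_cd, -, -, -, -, hH_cd, hH_ba⟩ := h.switched
  obtain ⟨-, -, hne_ad, hne_bc, -, -, -, -, gbc, gad⟩ := h
  ext T
  simp only [mem_filter, mem_cliqueFinset_iff]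
  constructor
  · rintro ⟨hT, hab, hcd⟩
    have hbc : ¬(b ∈ T ∧ c ∈ T) := fun ⟨hb, hc⟩ => gbc (hT.1 hb hc hne_bc)
    have had : ¬(a ∈ T ∧ d ∈ T) := fun ⟨ha, hd⟩ => gad (hT.1 ha hd hne_ad)
    exact ⟨(isNClique_twoSwitch_iff hab hcd hbc had).mpr hT, hbc, had⟩
  · rintro ⟨hT, hbc, had⟩
    have hab : ¬(a ∈ T ∧ b ∈ T) := fun ⟨ha, hb⟩ => hH_ba (hT.1 hb ha hne_ba)
    have hcd : ¬(c ∈ T ∧ d ∈ T) := fun ⟨hc, hd⟩ => hH_cd (hT.1 hc hd hne_cd)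
    exact ⟨(isNClique_twoSwitch_iff hab hcd hbc had).mp hT, hab, hcd⟩

theorem card_cliqueFinset_three_sub_card_cliqueFinset_three_twoSwitch [Fintype V] [DecidableEq V]
    [DecidableRel G.Adj] [DecidableRel (twoSwitch G a b c d).Adj] (h : A4 G a b c d) :
    (#(G.cliqueFinset 3) - #((twoSwitch G a b c d).cliqueFinset 3) : ℤ) =
      #{v ∈ ({a, b, c, d} : Finset V)ᶜ | G.Adj v a ∧ G.Adj v b ∧ ¬G.Adj v c ∧ ¬G.Adj v d ∨
        G.Adj v c ∧ G.Adj v d ∧ ¬G.Adj v a ∧ ¬G.Adj v b} -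
      #{v ∈ ({a, b, c, d} : Finset V)ᶜ | G.Adj v b ∧ G.Adj v c ∧ ¬G.Adj v a ∧ ¬G.Adj v d ∨
        G.Adj v a ∧ G.Adj v d ∧ ¬G.Adj v b ∧ ¬G.Adj v c} := by
  set S : Finset V := {a, b, c, d}
  have hG := h.forall_mem_not_adj_and_adj
  have hS : ({b, c, d, a} : Finset V) = S := by ext; simp [S]; tauto
  have hH := hS ▸ h.switched.forall_mem_not_adj_and_adj
  have hHG : ∀ x y, {v ∈ Sᶜ | (twoSwitch G a b c d).Adj v x ∧ (twoSwitch G a b c d).Adj v y} =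
      {v ∈ Sᶜ | G.Adj v x ∧ G.Adj v y} := fun x y => filter_congr fun v hv => by
    rw [twoSwitch_adj_iff_of_notMem (mem_compl.mp hv),
      twoSwitch_adj_iff_of_notMem (mem_compl.mp hv)]
  have hcommon := h.filter_cliqueFinset_three_eq_twoSwitch
  obtain ⟨-, -, -, -, -, -, hH_bc, hH_da, -, -⟩ := h.switched
  obtain ⟨hab, hac, had, hbc, hbd, hcd, gab, gcd, -, -⟩ := h
  rw [card_cliqueFinset_three_eq_of_adj_of_adj gab gcd hac had hbc hbd,
    card_cliqueFinset_three_eq_of_adj_of_adj hH_bc hH_da.symm hab.symm hbd hac.symm hcd, hcommon,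
    filter_adj_and_adj_eq_filter_compl fun w hw => (hG w hw).1,
    filter_adj_and_adj_eq_filter_compl fun w hw => (hG w hw).2,
    filter_adj_and_adj_eq_filter_compl fun w hw => (hH w hw).1,
    filter_adj_and_adj_eq_filter_compl fun w hw => (hH w hw).2 ∘ And.symm, hHG, hHG]
  have := card_filter_sides_four_cycle Sᶜ (G.Adj · a) (G.Adj · b) (G.Adj · c) (G.Adj · d)
  push_cast
  linarith

end A4

open scoped Classical in
theorem stmt_6 {V : Type*} [Fintype V] (G : SimpleGraph V) (a b c d : V)
    (h : A4 G a b c d) :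
    let H := twoSwitch G a b c d
    let A := Finset.univ.filter fun v : V => v ∉ ({a, b, c, d} : Set V) ∧
      (G.neighborFinset v ∩ {a, b, c, d} = {a, b} ∨
        G.neighborFinset v ∩ {a, b, c, d} = {c, d})
    let B := Finset.univ.filter fun v : V => v ∉ ({a, b, c, d} : Set V) ∧
      (G.neighborFinset v ∩ {a, b, c, d} = {b, c} ∨
        G.neighborFinset v ∩ {a, b, c, d} = {a, d})
    ((G.cliqueFinset 3).card - ((H.cliqueFinset 3).card : ℤ) =
        (A.card : ℤ) - (B.card : ℤ)) ∧
      (Nonempty (H ≃g G) → A.card = B.card) := by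
  intro H A B
  have ⟨hab, hac, had, hbc, hbd, hcd, _⟩ := h
  have hAB : A = {v ∈ ({a, b, c, d} : Finset V)ᶜ | G.Adj v a ∧ G.Adj v b ∧ ¬G.Adj v c ∧
        ¬G.Adj v d ∨ G.Adj v c ∧ G.Adj v d ∧ ¬G.Adj v a ∧ ¬G.Adj v b} ∧
      B = {v ∈ ({a, b, c, d} : Finset V)ᶜ | G.Adj v b ∧ G.Adj v c ∧ ¬G.Adj v a ∧
        ¬G.Adj v d ∨ G.Adj v a ∧ G.Adj v d ∧ ¬G.Adj v b ∧ ¬G.Adj v c} := by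
    constructor <;>
    · ext v
      simp only [A, B, mem_filter, mem_univ, true_and, mem_compl, Set.mem_insert_iff,
        Set.mem_singleton_iff, mem_insert, mem_singleton]
      refine and_congr_right fun _ => ?_
      rw [inter_eq_pair_iff (by simp) (by simp), inter_eq_pair_iff (by simp) (by simp)]
      simp [hab, hac, had, hbc, hbd, hcd, hab.symm, hac.symm, had.symm, hbc.symm, hbd.symm,
        hcd.symm]
  have hcount : (#(G.cliqueFinset 3) - #(H.cliqueFinset 3) : ℤ) = #A - #B := by
    rw [hAB.1, hAB.2]
    exact h.card_cliqueFinset_three_sub_card_cliqueFinset_three_twoSwitch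
  refine ⟨hcount, fun ⟨e⟩ => ?_⟩
  have := Iso.card_cliqueFinset_eq e 3
  omega
end
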